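/- Let T be a triangle with edge e ⊂ ∂T of length |e|, and let ψ be the weak function equal to 0 in the interior of T and equal to the indicator of e on ∂T. Then the weak gradient of ψ in RT_0(T) equals (C_T/3)(x − x_T) + (|e|/|T|) n, where n is the outward unit normal on e, x_T the centroid of T, and C_T = 2|T|/‖x − x_T‖²_{L²(T)}. -/

import Mathlib

/-!
Pair the field with `τ = a + c x`. Because `x_T` is the centroid, `∫_T (x - x_T) = 0`, so the
first term contributes `(C_T c / 3) ‖x - x_T‖²_{L²(T)} = 2 |T| c / 3` and the second
`|e| (n·a + c n·x_T)`. On the edge `τ·n = n·a + c n·B` is constant. The two sides agree because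
`n·(B - x_T) = h / 3` for the height `h = n·(B - A)` over `e`, and `|T| = |e| h / 2`.
All integrals over `T` are computed by pulling back to the reference triangle in `ℝ × ℝ`,
where Fubini applies.
-/

open MeasureTheory Set
open scoped InnerProductSpace

def refTriangle : Set (ℝ × ℝ) := {p | 0 ≤ p.1 ∧ 0 ≤ p.2 ∧ p.1 + p.2 ≤ 1}

lemma isClosed_refTriangle : IsClosed refTriangle :=
  (isClosed_le continuous_const continuous_fst).inter
    ((isClosed_le continuous_const continuous_snd).inter
      (isClosed_le (continuous_fst.add continuous_snd) continuous_const))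

lemma isCompact_refTriangle : IsCompact refTriangle := by
  refine Metric.isCompact_of_isClosed_isBounded isClosed_refTriangle
    ((Metric.isBounded_Icc (0 : ℝ × ℝ) (1, 1)).subset ?_)
  rintro p ⟨h1, h2, h3⟩
  exact ⟨⟨h1, h2⟩, ⟨by simp; linarith, by simp; linarith⟩⟩

lemma convex_refTriangle : Convex ℝ refTriangle := by
  rintro p ⟨hp1, hp2, hp3⟩ q ⟨hq1, hq2, hq3⟩ s t hs ht hst
  simp only [refTriangle, mem_ofPred_eq, Prod.fst_add, Prod.snd_add, Prod.smul_fst,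
    Prod.smul_snd, smul_eq_mul]
  refine ⟨by positivity, by positivity, ?_⟩
  nlinarith

lemma mem_refTriangle_iff {x y : ℝ} (hx : x ∈ Icc (0 : ℝ) 1) :
    (x, y) ∈ refTriangle ↔ y ∈ Icc 0 (1 - x) := by
  simp only [refTriangle, mem_Icc, mem_ofPred_eq]
  constructor
  · rintro ⟨-, h2, h3⟩
    exact ⟨h2, by linarith⟩
  · rintro ⟨h2, h3⟩
    exact ⟨hx.1, h2, by linarith⟩

lemma integral_indicator_refTriangle_slice (f : ℝ × ℝ → ℝ) (x : ℝ) :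
    ∫ y, refTriangle.indicator f (x, y)
      = (Icc 0 1).indicator (fun x => ∫ y in (0)..(1 - x), f (x, y)) x := by
  by_cases hx : x ∈ Icc (0 : ℝ) 1
  · have hslice : (fun y => refTriangle.indicator f (x, y))
        = (Icc 0 (1 - x)).indicator fun y => f (x, y) := by
      ext y
      simp only [indicator, mem_refTriangle_iff hx]
    rw [indicator_of_mem hx, hslice, integral_indicator measurableSet_Icc,
      integral_Icc_eq_integral_Ioc, intervalIntegral.integral_of_le (by linarith [hx.2])]
  · rw [indicator_of_notMem hx]
    refine integral_eq_zero_of_ae (Filter.Eventually.of_forall fun y => ?_)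
    exact indicator_of_notMem (fun h => hx ⟨h.1, by linarith [h.2.1, h.2.2]⟩) _

lemma integral_refTriangle (α β γ : ℝ) :
    ∫ p in refTriangle, (α + β * p.1 + γ * p.2) = α / 2 + β / 6 + γ / 6 := by
  have hint : IntegrableOn (fun p : ℝ × ℝ => α + β * p.1 + γ * p.2) refTriangle :=
    (by fun_prop : Continuous _).continuousOn.integrableOn_compact isCompact_refTriangle
  have hii {f : ℝ → ℝ} (hf : Continuous f) (a b : ℝ) : IntervalIntegrable f volume a b :=
    hf.intervalIntegrable a b
  have hslice (x : ℝ) : ∫ y in (0)..(1 - x), (α + β * x + γ * y)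
      = (α + γ / 2) + (β - α - γ) * x + (γ / 2 - β) * x ^ 2 := by
    rw [intervalIntegral.integral_add (hii (by fun_prop) _ _) (hii (by fun_prop) _ _),
      intervalIntegral.integral_const_mul, integral_id]
    simp only [intervalIntegral.integral_const, sub_zero, smul_eq_mul]
    ring
  rw [← integral_indicator isClosed_refTriangle.measurableSet, Measure.volume_eq_prod,
    integral_prod _ ((integrable_indicator_iff isClosed_refTriangle.measurableSet).2 hint)]
  simp only [integral_indicator_refTriangle_slice, hslice]
  rw [integral_indicator measurableSet_Icc, integral_Icc_eq_integral_Ioc,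
    ← intervalIntegral.integral_of_le zero_le_one,
    intervalIntegral.integral_add (hii (by fun_prop) _ _) (hii (by fun_prop) _ _),
    intervalIntegral.integral_add (hii (by fun_prop) _ _) (hii (by fun_prop) _ _),
    intervalIntegral.integral_const_mul, intervalIntegral.integral_const_mul, integral_id,
    integral_pow]
  norm_num
  ring

lemma convexHull_triple_eq_image {E : Type*} [AddCommGroup E] [Module ℝ E] (A B C : E) :
    convexHull ℝ {A, B, C}
      = (fun p : ℝ × ℝ => A + p.1 • (B - A) + p.2 • (C - A)) '' refTriangle := by
  apply (convexHull_min _ _).antisymm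
  · rintro _ ⟨p, ⟨h1, h2, h3⟩, rfl⟩
    have hw : ∑ i, ![1 - p.1 - p.2, p.1, p.2] i = 1 := by
      simp only [Fin.sum_univ_three, Matrix.cons_val]
      ring
    convert (convex_convexHull ℝ {A, B, C}).sum_mem (t := Finset.univ)
      (fun i _ => by fin_cases i <;> simp <;> linarith) hw
      (fun i _ => subset_convexHull ℝ _ (by fin_cases i <;> simp : ![A, B, C] i ∈ _)) using 1
    simp only [Fin.sum_univ_three, Matrix.cons_val]
    module
  · rintro _ (rfl | rfl | rfl)
    · exact ⟨(0, 0), by norm_num [refTriangle], by simp⟩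
    · exact ⟨(1, 0), by norm_num [refTriangle], by simp⟩
    · exact ⟨(0, 1), by norm_num [refTriangle], by simp⟩
  · rintro _ ⟨p, hp, rfl⟩ _ ⟨q, hq, rfl⟩ s t hs ht hst
    refine ⟨s • p + t • q, convex_refTriangle hp hq hs ht hst, ?_⟩
    simp only [Prod.fst_add, Prod.snd_add, Prod.smul_fst, Prod.smul_snd, smul_eq_mul]
    linear_combination (norm := module) (-hst) • A

lemma setIntegral_image_affine_prod (a u v : ℝ × ℝ) (hd : u.1 * v.2 - u.2 * v.1 ≠ 0)
    {s : Set (ℝ × ℝ)} (hs : MeasurableSet s) (g : ℝ × ℝ → ℝ) :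
    ∫ p in (fun p : ℝ × ℝ => a + p.1 • u + p.2 • v) '' s, g p
      = |u.1 * v.2 - u.2 * v.1| * ∫ p in s, g (a + p.1 • u + p.2 • v) := by
  let L : ℝ × ℝ →L[ℝ] ℝ × ℝ := LinearMap.toContinuousLinearMap
    (Matrix.toLin (Module.Basis.finTwoProd ℝ) (Module.Basis.finTwoProd ℝ) !![u.1, v.1; u.2, v.2])
  have hL (p : ℝ × ℝ) : L p = p.1 • u + p.2 • v := by
    simp [L, Matrix.toLin_finTwoProd_apply, Prod.ext_iff, mul_comm]
  have hdet : L.det = u.1 * v.2 - u.2 * v.1 := by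
    rw [LinearMap.det_toContinuousLinearMap, LinearMap.det_toLin, Matrix.det_fin_two_of]
    ring
  have hinj : Function.Injective L :=
    (LinearMap.equivOfDetNeZero L.toLinearMap (by rwa [← ContinuousLinearMap.det, hdet])).injective
  have hf : (fun p : ℝ × ℝ => a + p.1 • u + p.2 • v) = fun p => a + L p := by
    ext1 p
    rw [hL, add_assoc]
  rw [hf, integral_image_eq_integral_abs_det_fderiv_smul volume hs
    (fun p _ => (L.hasFDerivAt.const_add a).hasFDerivWithinAt)
    (fun p _ q _ h => hinj (add_left_cancel h)), hdet, integral_smul]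
  simp only [hL, add_assoc, smul_eq_mul]

local notation "E²" => EuclideanSpace ℝ (Fin 2)

def cross (u v : E²) : ℝ := u 0 * v 1 - u 1 * v 0

def planeEquivProd : E² ≃ᵐ ℝ × ℝ :=
  (MeasurableEquiv.toLp 2 (Fin 2 → ℝ)).symm.trans MeasurableEquiv.finTwoArrow

lemma measurePreserving_planeEquivProd : MeasurePreserving planeEquivProd :=
  (volume_preserving_finTwoArrow ℝ).comp
    (EuclideanSpace.volume_preserving_symm_measurableEquiv_toLp (Fin 2))

lemma setIntegral_image_affine_plane (A u v : E²) (hd : cross u v ≠ 0)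
    {s : Set (ℝ × ℝ)} (hs : MeasurableSet s) (g : E² → ℝ) :
    ∫ x in (fun p : ℝ × ℝ => A + p.1 • u + p.2 • v) '' s, g x
      = |cross u v| * ∫ p in s, g (A + p.1 • u + p.2 • v) := by
  set κ := planeEquivProd
  have hκ : (fun p : ℝ × ℝ => κ (A + p.1 • u + p.2 • v))
      = fun p => κ A + p.1 • κ u + p.2 • κ v := rfl
  have hκ_symm (p : ℝ × ℝ) : κ.symm (κ A + p.1 • κ u + p.2 • κ v) = A + p.1 • u + p.2 • v := by
    rw [← congrFun hκ p, κ.symm_apply_apply]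
  have htransfer := (measurePreserving_planeEquivProd : MeasurePreserving κ).setIntegral_image_emb
    κ.measurableEmbedding (fun y => g (κ.symm y)) ((fun p : ℝ × ℝ => A + p.1 • u + p.2 • v) '' s)
  simp only [MeasurableEquiv.symm_apply_apply] at htransfer
  rw [← htransfer, image_image, hκ, setIntegral_image_affine_prod _ (κ u) (κ v) hd hs]
  simp only [hκ_symm]
  rfl

lemma setIntegral_triangle_affine (A B C : E²) (hd : cross (B - A) (C - A) ≠ 0) (r : ℝ) (w : E²) :
    ∫ x in convexHull ℝ {A, B, C}, (r + ⟪x, w⟫_ℝ)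
      = |cross (B - A) (C - A)| / 2 * (r + ⟪(3 : ℝ)⁻¹ • (A + B + C), w⟫_ℝ) := by
  have hpull (p : ℝ × ℝ) : r + ⟪A + p.1 • (B - A) + p.2 • (C - A), w⟫_ℝ
      = (r + ⟪A, w⟫_ℝ) + ⟪B - A, w⟫_ℝ * p.1 + ⟪C - A, w⟫_ℝ * p.2 := by
    simp only [inner_add_left, real_inner_smul_left]
    ring
  rw [convexHull_triple_eq_image,
    setIntegral_image_affine_plane _ _ _ hd isClosed_refTriangle.measurableSet]
  simp only [hpull]
  rw [integral_refTriangle]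
  simp only [real_inner_smul_left, inner_add_left, inner_sub_left]
  ring

lemma volume_triangle (A B C : E²) (hd : cross (B - A) (C - A) ≠ 0) :
    (volume (convexHull ℝ {A, B, C})).toReal = |cross (B - A) (C - A)| / 2 := by
  simpa [measureReal_def] using setIntegral_triangle_affine A B C hd 1 0

lemma real_inner_eq_fin_two (x y : E²) : ⟪x, y⟫_ℝ = x 0 * y 0 + x 1 * y 1 := by
  simp [PiLp.inner_apply, Fin.sum_univ_two, mul_comm]

lemma norm_sq_eq_fin_two (x : E²) : ‖x‖ ^ 2 = x 0 ^ 2 + x 1 ^ 2 := by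
  simp [EuclideanSpace.norm_sq_eq, Fin.sum_univ_two]

lemma cross_sub_sub_eq (A B C : E²) : cross (B - A) (C - A) = cross (B - A) (C - B) := by
  simp only [cross, PiLp.sub_apply]
  ring

lemma abs_cross_eq_abs_inner_mul_norm (u v n : E²) (hn : ‖n‖ = 1) (hvn : ⟪v, n⟫_ℝ = 0) :
    |cross u v| = |⟪u, n⟫_ℝ| * ‖v‖ := by
  have hn' : n 0 ^ 2 + n 1 ^ 2 = 1 := by rw [← norm_sq_eq_fin_two, hn, one_pow]
  rw [real_inner_eq_fin_two] at hvn
  have hfactor : cross u v = ⟪u, n⟫_ℝ * cross n v := by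
    rw [real_inner_eq_fin_two]
    unfold cross
    linear_combination (u 0 * n 1 - u 1 * n 0) * hvn - (u 0 * v 1 - u 1 * v 0) * hn'
  have hnv : cross n v ^ 2 = ‖v‖ ^ 2 := by
    rw [norm_sq_eq_fin_two]
    unfold cross
    linear_combination (v 0 ^ 2 + v 1 ^ 2) * hn' - (v 0 * n 0 + v 1 * n 1) * hvn
  rw [hfactor, abs_mul, (sq_eq_sq_iff_abs_eq_abs _ _).1 hnv, abs_norm]

lemma setIntegral_norm_sub_sq_pos {E : Type*} [NormedAddCommGroup E] [MeasurableSpace E]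
    [BorelSpace E] {μ : Measure E} [NullSingletonClass μ] [IsFiniteMeasureOnCompacts μ] {s : Set E}
    (hs : IsCompact s) (hμs : μ s ≠ 0) (y : E) :
    0 < ∫ x in s, ‖x - y‖ ^ 2 ∂μ := by
  have hint : IntegrableOn (fun x => ‖x - y‖ ^ 2) s μ :=
    (by fun_prop : Continuous _).continuousOn.integrableOn_compact hs
  have hsupp : Function.support (fun x => ‖x - y‖ ^ 2) ∩ s = s \ {y} := by
    ext x
    simp [sub_eq_zero, and_comm]
  rw [setIntegral_pos_iff_support_of_nonneg_ae (Filter.Eventually.of_forall fun x => by positivity)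
    hint, hsupp, measure_sdiff_null (measure_singleton y)]
  exact pos_iff_ne_zero.2 hμs

lemma setIntegral_inner_eq_of_moments {E : Type*} [NormedAddCommGroup E] [InnerProductSpace ℝ E]
    [MeasurableSpace E] [BorelSpace E] {μ : Measure E} [IsFiniteMeasureOnCompacts μ] {s : Set E}
    (hs : IsCompact s) {m : ℝ} {xc : E}
    (hmoment : ∀ (r : ℝ) (w : E), ∫ x in s, (r + ⟪x, w⟫_ℝ) ∂μ = m * (r + ⟪xc, w⟫_ℝ))
    (α β c : ℝ) (n a : E) :
    ∫ x in s, ⟪α • (x - xc) + β • n, a + c • x⟫_ℝ ∂μ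
      = α * c * ∫ x in s, ‖x - xc‖ ^ 2 ∂μ + β * m * (⟪n, a⟫_ℝ + c * ⟪n, xc⟫_ℝ) := by
  have hsplit (x : E) : ⟪α • (x - xc) + β • n, a + c • x⟫_ℝ
      = α * c * ‖x - xc‖ ^ 2 + ((β * ⟪n, a⟫_ℝ - α * ⟪xc, a⟫_ℝ - α * c * ⟪xc, xc⟫_ℝ)
        + ⟪x, α • a + (α * c) • xc + (β * c) • n⟫_ℝ) := by
    rw [← real_inner_self_eq_norm_sq]
    simp only [inner_add_left, inner_add_right, inner_sub_left, inner_sub_right,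
      real_inner_smul_left, real_inner_smul_right, real_inner_comm x]
    ring
  have hint_sq : IntegrableOn (fun x => ‖x - xc‖ ^ 2) s μ :=
    (by fun_prop : Continuous _).continuousOn.integrableOn_compact hs
  have hint_aff (r : ℝ) (w : E) : IntegrableOn (fun x => r + ⟪x, w⟫_ℝ) s μ :=
    (by fun_prop : Continuous _).continuousOn.integrableOn_compact hs
  simp only [hsplit]
  rw [integral_add (hint_sq.const_mul _) (hint_aff _ _), integral_const_mul, hmoment]
  simp only [inner_add_right, real_inner_smul_right, real_inner_comm n]
  ring

lemma integral_inner_segment_of_inner_eq_zero {E : Type*} [NormedAddCommGroup E]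
    [InnerProductSpace ℝ E] (a B C n : E) (c : ℝ) (h : ⟪C - B, n⟫_ℝ = 0) :
    ∫ t in (0 : ℝ)..1, ⟪a + c • (B + t • (C - B)), n⟫_ℝ = ⟪a, n⟫_ℝ + c * ⟪B, n⟫_ℝ := by
  simp [inner_add_left, real_inner_smul_left, h]

/-- Weak gradient of the edge basis function: let `T` be the triangle with
vertices `A, B, C`, centroid `x_T`, area `|T|`, and let `e = [B, C]` be an edge
of `T` with length `|e| = ‖C - B‖` and outward unit normal `n`.  Let
`ψ = {0, χ_e}` be the weak function vanishing in the interior of `T` and equal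
to the indicator of `e` on `∂T`.  Then the function
`x ↦ (C_T/3)(x - x_T) + (|e|/|T|) n`, with `C_T = 2|T|/‖x - x_T‖²_{L²(T)}`,
satisfies the defining equation of the weak gradient: for every
`τ ∈ RT₀(T)`, `τ(x) = a + c x`,
`(∇_w ψ, τ)_T = ⟨ψ_b, τ·n⟩_{∂T} = ∫_e τ·n ds` (the interior term vanishes
since `ψ₀ = 0`, and only the edge `e` contributes on the boundary). -/
theorem weak_gradient_edge_basis
    (A B C : EuclideanSpace ℝ (Fin 2))
    (hABC : AffineIndependent ℝ ![A, B, C])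
    (T : Set (EuclideanSpace ℝ (Fin 2)))
    (hT : T = convexHull ℝ {A, B, C})
    (xT : EuclideanSpace ℝ (Fin 2)) (hxT : xT = (3:ℝ)⁻¹ • (A + B + C))
    (areaT : ℝ) (hareaT : areaT = (volume T).toReal)
    (CT : ℝ) (hCT : CT = 2 * areaT / ∫ x in T, ‖x - xT‖ ^ 2)
    (lenE : ℝ) (hlenE : lenE = ‖C - B‖)
    (n : EuclideanSpace ℝ (Fin 2))
    (hn_unit : ‖n‖ = 1)
    (hn_perp : ⟪C - B, n⟫_ℝ = 0)
    (hn_outward : ⟪A - B, n⟫_ℝ < 0) :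
    ∀ (a : EuclideanSpace ℝ (Fin 2)) (c : ℝ),
      ∫ x in T, ⟪(CT / 3) • (x - xT) + (lenE / areaT) • n, a + c • x⟫_ℝ
        = (∫ t in (0:ℝ)..1, ⟪a + c • (B + t • (C - B)), n⟫_ℝ) * ‖C - B‖ := by
  intro a c
  have hBC : B ≠ C := fun h => hABC.injective.ne (by decide : (1 : Fin 3) ≠ 2) (by simp [h])
  have hheight : 0 < ⟪B - A, n⟫_ℝ := by
    rw [← neg_sub, inner_neg_left]
    linarith
  have hlen : 0 < lenE := hlenE ▸ norm_pos_iff.2 (sub_ne_zero.2 hBC.symm)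
  have hcross : |cross (B - A) (C - A)| = ⟪B - A, n⟫_ℝ * lenE := by
    rw [cross_sub_sub_eq, abs_cross_eq_abs_inner_mul_norm _ _ _ hn_unit hn_perp,
      abs_of_pos hheight, hlenE]
  have hcross_ne : cross (B - A) (C - A) ≠ 0 := abs_pos.1 (hcross ▸ by positivity)
  have harea : areaT = ⟪B - A, n⟫_ℝ * lenE / 2 := by
    rw [hareaT, hT, volume_triangle _ _ _ hcross_ne, hcross]
  have hmoment (r : ℝ) (w : EuclideanSpace ℝ (Fin 2)) :
      ∫ x in T, (r + ⟪x, w⟫_ℝ) = areaT * (r + ⟪xT, w⟫_ℝ) := by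
    rw [hT, setIntegral_triangle_affine _ _ _ hcross_ne, hcross, harea, hxT]
  have hcompact : IsCompact T := hT ▸ (toFinite {A, B, C}).isCompact_convexHull (𝕜 := ℝ)
  have harea_pos : 0 < areaT := harea ▸ by positivity
  have hI : 0 < ∫ x in T, ‖x - xT‖ ^ 2 :=
    setIntegral_norm_sub_sq_pos hcompact (fun h0 => by simp [hareaT, h0] at harea_pos) xT
  have hxTn : ⟪n, xT⟫_ℝ = ⟪B, n⟫_ℝ - ⟪B - A, n⟫_ℝ / 3 := by
    rw [hxT, real_inner_comm, real_inner_smul_left, inner_add_left, inner_add_left, inner_sub_left]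
    rw [inner_sub_left] at hn_perp
    linarith
  rw [setIntegral_inner_eq_of_moments hcompact hmoment,
    integral_inner_segment_of_inner_eq_zero _ _ _ _ _ hn_perp, hCT, hxTn, ← hlenE, real_inner_comm]
  field_simp
  rw [harea]
  ring
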